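/- Fix a finite type σ over Ω, a countable ordinal ζ, and a family (f_ξ)_{ξ<ζ} ⊆ Ω_σ. If f_α ≤hp f_γ whenever α < γ < ζ, then limsup_{ξ→ζ} f_ξ =hp sup_{ξ<ζ} f_ξ. -/

import Mathlib

/-!  Framework: finite type structure over Ω = countable ordinals,
     limsup/liminf, transfinite iteration functionals, hereditarily
     positive and hereditarily monotone functionals. -/

noncomputable section
namespace IterOrd

open Ordinal

theorem omega1_pos : (0 : Ordinal) < ω₁ := Ordinal.omega0_pos.trans Ordinal.omega0_lt_omega_one

/-- `Om` is Ω, the set of countable ordinals (ordinals `< ω₁`). -/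
abbrev Om : Type 1 := {o : Ordinal // o < ω₁}

/-- Infimum of a subset of Ω (the minimum for nonempty sets; `0` for `∅`). -/
def infOm (s : Set Om) : Om :=
  ⟨sInf (Subtype.val '' s), by
    rcases (Subtype.val '' s).eq_empty_or_nonempty with h | h
    · rw [h]; simpa using omega1_pos
    · obtain ⟨x, _, he⟩ := csInf_mem h
      exact he ▸ x.2⟩

/-- Supremum of a subset of Ω.  Whenever the supremum of the set exists in Ω
(in particular for every countable subset, by regularity of `ω₁`) this is the
genuine supremum; otherwise it takes a junk value. -/
def supOm (s : Set Om) : Om :=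
  if h : sSup (Subtype.val '' s) < ω₁ then ⟨sSup (Subtype.val '' s), h⟩ else ⟨0, omega1_pos⟩

/-- Finite types over the base type `o` (interpreted as Ω). -/
inductive Ty : Type
  | base : Ty
  | arrow : Ty → Ty → Ty
deriving DecidableEq

/-- The full type structure over Ω: `El base = Ω` and
`El (arrow σ τ)` is the set of all functions `El σ → El τ`. -/
@[reducible] def El : Ty → Type 1
  | .base => Om
  | .arrow σ τ => El σ → El τ

/-- The order on each `El σ`: the ordinal order at base type, pointwise at arrow types. -/
def Le : (σ : Ty) → El σ → El σ → Prop
  | .base => fun x y => x ≤ y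
  | .arrow σ τ => fun f g => ∀ x : El σ, Le τ (f x) (g x)

/-- Suprema, computed pointwise at function types. -/
def supEl : (σ : Ty) → Set (El σ) → El σ
  | .base => supOm
  | .arrow σ τ => fun S (x : El σ) => supEl τ ((fun f : El (.arrow σ τ) => f x) '' S)

/-- Infima, computed pointwise at function types. -/
def infEl : (σ : Ty) → Set (El σ) → El σ
  | .base => infOm
  | .arrow σ τ => fun S (x : El σ) => infEl τ ((fun f : El (.arrow σ τ) => f x) '' S)

/-- `limsup_{ξ→ζ} f ξ = inf_{γ<ζ} sup_{γ≤ξ<ζ} f ξ`. -/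
def limsupEl (σ : Ty) (ζ : Ordinal) (f : ∀ ξ : Ordinal, ξ < ζ → El σ) : El σ :=
  infEl σ {y | ∃ γ, ∃ _ : γ < ζ, y = supEl σ {z | ∃ ξ, ∃ h : ξ < ζ, γ ≤ ξ ∧ z = f ξ h}}

/-- `liminf_{ξ→ζ} f ξ = sup_{γ<ζ} inf_{γ≤ξ<ζ} f ξ`. -/
def liminfEl (σ : Ty) (ζ : Ordinal) (f : ∀ ξ : Ordinal, ξ < ζ → El σ) : El σ :=
  supEl σ {y | ∃ γ, ∃ _ : γ < ζ, y = infEl σ {z | ∃ ξ, ∃ h : ξ < ζ, γ ≤ ξ ∧ z = f ξ h}}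

/-- `limsup` of a ζ-indexed sequence of ordinals. -/
def oLimsup (ζ : Ordinal) (a : Ordinal → Ordinal) : Ordinal :=
  sInf {s | ∃ γ, γ < ζ ∧ s = sSup (a '' {ξ | γ ≤ ξ ∧ ξ < ζ})}

/-- `liminf` of a ζ-indexed sequence of ordinals. -/
def oLiminf (ζ : Ordinal) (a : Ordinal → Ordinal) : Ordinal :=
  sSup {s | ∃ γ, γ < ζ ∧ s = sInf (a '' {ξ | γ ≤ ξ ∧ ξ < ζ})}

/-- The α-iteration functional of type σ:
`Iter 0 f x = x`, `Iter (α+1) f x = f (Iter α f x)`, and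
`Iter μ f x = limsup_{ξ→μ} Iter ξ f x` for limit μ. -/
def Iter (σ : Ty) (α : Ordinal) : (El σ → El σ) → El σ → El σ :=
  Ordinal.limitRecOn (motive := fun _ => (El σ → El σ) → El σ → El σ) α
    (fun _ x => x)
    (fun _ ih f x => f (ih f x))
    (fun μ _ ih f x => limsupEl σ μ (fun ξ h => ih ξ h f x))

/-- The pair (hereditarily positive, ≤hp), defined simultaneously by recursion on the type.
Every element of `Ω` and of `Ω_{ρ→τ}` with `ρ ≠ τ` is h.p., and `≤hp` there is `≤`;
`f : Ω_{τ→τ}` is h.p. iff it preserves h.p., is inflationary on h.p. arguments and is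
monotone (w.r.t. `≤hp`) on h.p. arguments; `f ≤hp f'` on `Ω_{τ→τ}` iff `f x ≤hp f' x`
for every h.p. `x`. -/
def HPaux : (σ : Ty) → (El σ → Prop) × (El σ → El σ → Prop)
  | .base => ⟨fun _ => True, fun x y => x ≤ y⟩
  | .arrow ρ τ =>
      ⟨fun f =>
        if h : ρ = τ then
          (∀ x, (HPaux ρ).1 x → (HPaux τ).1 (f x)) ∧
          (∀ x, (HPaux ρ).1 x → (HPaux τ).2 (cast (congrArg El h) x) (f x)) ∧
          (∀ x y, (HPaux ρ).1 x → (HPaux ρ).1 y → (HPaux ρ).2 x y → (HPaux τ).2 (f x) (f y))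
        else True,
       fun f g =>
        if ρ = τ then ∀ x, (HPaux ρ).1 x → (HPaux τ).2 (f x) (g x)
        else Le (.arrow ρ τ) f g⟩

/-- Hereditarily positive functionals. -/
def Hp (σ : Ty) : El σ → Prop := (HPaux σ).1

/-- The order `≤hp`. -/
def HpLe (σ : Ty) : El σ → El σ → Prop := (HPaux σ).2

/-- `f =hp g` iff `f ≤hp g` and `g ≤hp f`. -/
def HpEq (σ : Ty) (f g : El σ) : Prop := HpLe σ f g ∧ HpLe σ g f

/-- The pair (hereditarily monotone, ≤ on the hereditarily monotone structure),
by recursion on the type.  `f` is hereditarily monotone iff it maps hereditarily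
monotone arguments to hereditarily monotone values, monotonically; the order is
pointwise over hereditarily monotone arguments (i.e. the order of `Ω^mon`). -/
def HMaux : (σ : Ty) → (El σ → Prop) × (El σ → El σ → Prop)
  | .base => ⟨fun _ => True, fun x y => x ≤ y⟩
  | .arrow σ τ =>
      ⟨fun f =>
        (∀ x, (HMaux σ).1 x → (HMaux τ).1 (f x)) ∧
        (∀ x y, (HMaux σ).1 x → (HMaux σ).1 y → (HMaux σ).2 x y → (HMaux τ).2 (f x) (f y)),
       fun f g => ∀ x, (HMaux σ).1 x → (HMaux τ).2 (f x) (g x)⟩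

/-- Hereditarily monotone functionals: the members of the type structure `Ω^mon`. -/
def HM (σ : Ty) : El σ → Prop := (HMaux σ).1

/-- The (pointwise) order of the hereditarily monotone type structure `Ω^mon`. -/
def LeHM (σ : Ty) : El σ → El σ → Prop := (HMaux σ).2

/-- Equality in the hereditarily monotone type structure `Ω^mon`. -/
def EqHM (σ : Ty) (f g : El σ) : Prop := LeHM σ f g ∧ LeHM σ g f

lemma supOm_eq_of_cofinal {S T : Set Om} (hST : ∀ x ∈ S, ∃ y ∈ T, x ≤ y)
    (hTS : ∀ y ∈ T, ∃ x ∈ S, y ≤ x) : supOm S = supOm T := by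
  have hval : sSup (Subtype.val '' S) = sSup (Subtype.val '' T) := by
    apply csSup_eq_csSup_of_forall_exists_le
    · rintro _ ⟨x, hx, rfl⟩
      obtain ⟨y, hy, hxy⟩ := hST x hx
      exact ⟨y, ⟨y, hy, rfl⟩, hxy⟩
    · rintro _ ⟨y, hy, rfl⟩
      obtain ⟨x, hx, hyx⟩ := hTS y hy
      exact ⟨x, ⟨x, hx, rfl⟩, hyx⟩
  simp only [supOm, hval]

lemma infOm_singleton (a : Om) : infOm {a} = a :=
  Subtype.ext (by simp [infOm])

lemma infOm_empty_eq_supOm_empty : infOm ∅ = supOm ∅ :=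
  Subtype.ext (by simp [infOm, supOm, omega1_pos])

/-- On `Ω` every tail of a monotone family is cofinal in the whole family, so all the
suprema in the `limsup` coincide with the full supremum. -/
lemma limsupEl_base_eq_supEl_of_monotone (ζ : Ordinal) (f : ∀ ξ : Ordinal, ξ < ζ → Om)
    (h : ∀ α γ (hαγ : α < γ) (hγ : γ < ζ), f α (hαγ.trans hγ) ≤ f γ hγ) :
    limsupEl .base ζ f = supEl .base {y | ∃ ξ, ∃ hξ : ξ < ζ, y = f ξ hξ} := by
  rcases eq_or_ne ζ 0 with rfl | hζ
  · simpa [limsupEl, supEl, infEl] using infOm_empty_eq_supOm_empty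
  have tail_eq : ∀ γ < ζ, supOm {z | ∃ ξ, ∃ h : ξ < ζ, γ ≤ ξ ∧ z = f ξ h} =
      supOm {y | ∃ ξ, ∃ hξ : ξ < ζ, y = f ξ hξ} := by
    intro γ hγ
    apply supOm_eq_of_cofinal
    · rintro _ ⟨ξ, hξ, -, rfl⟩
      exact ⟨f ξ hξ, ⟨ξ, hξ, rfl⟩, le_rfl⟩
    · rintro _ ⟨ξ, hξ, rfl⟩
      refine ⟨f (max ξ γ) (max_lt hξ hγ), ⟨max ξ γ, max_lt hξ hγ, le_max_right _ _, rfl⟩, ?_⟩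
      rcases lt_or_ge ξ γ with hξγ | hγξ
      · simpa only [max_eq_right hξγ.le] using h ξ γ hξγ hγ
      · simp only [max_eq_left hγξ, le_rfl]
  have tails : {y | ∃ γ, ∃ _ : γ < ζ,
      y = supOm {z | ∃ ξ, ∃ h : ξ < ζ, γ ≤ ξ ∧ z = f ξ h}} =
      {supOm {y | ∃ ξ, ∃ hξ : ξ < ζ, y = f ξ hξ}} := by
    ext y
    constructor
    · rintro ⟨γ, hγ, rfl⟩
      exact tail_eq γ hγ
    · rintro rfl
      exact ⟨0, pos_iff_ne_zero.2 hζ, (tail_eq 0 (pos_iff_ne_zero.2 hζ)).symm⟩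
  exact (congrArg infOm tails).trans (infOm_singleton _)

section Pointwise

variable {σ τ : Ty} {ζ : Ordinal} (f : ∀ ξ : Ordinal, ξ < ζ → El (.arrow σ τ)) (x : El σ)

lemma limsupEl_arrow_apply :
    limsupEl (.arrow σ τ) ζ f x = limsupEl τ ζ (fun ξ h => f ξ h x) := by
  have tail_apply : ∀ γ, (fun g : El (.arrow σ τ) => g x) ''
      {z | ∃ ξ, ∃ h : ξ < ζ, γ ≤ ξ ∧ z = f ξ h} = {z | ∃ ξ, ∃ h : ξ < ζ, γ ≤ ξ ∧ z = f ξ h x} := by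
    intro γ
    ext z
    simp [eq_comm]
  show infEl τ ((fun g : El (.arrow σ τ) => g x) '' _) = infEl τ _
  congr 1
  ext z
  simp only [Set.mem_image]
  constructor
  · rintro ⟨_, ⟨γ, hγ, rfl⟩, rfl⟩
    exact ⟨γ, hγ, congrArg (supEl τ) (tail_apply γ)⟩
  · rintro ⟨γ, hγ, rfl⟩
    exact ⟨_, ⟨γ, hγ, rfl⟩, congrArg (supEl τ) (tail_apply γ)⟩

lemma supEl_arrow_apply :
    supEl (.arrow σ τ) {y | ∃ ξ, ∃ hξ : ξ < ζ, y = f ξ hξ} x =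
      supEl τ {y | ∃ ξ, ∃ hξ : ξ < ζ, y = f ξ hξ x} := by
  show supEl τ ((fun g : El (.arrow σ τ) => g x) '' _) = _
  congr 1
  ext z
  simp [eq_comm]

end Pointwise

lemma limsupEl_eq_supEl_of_monotone (σ : Ty) (ζ : Ordinal) (f : ∀ ξ : Ordinal, ξ < ζ → El σ)
    (h : ∀ α γ (hαγ : α < γ) (hγ : γ < ζ), Le σ (f α (hαγ.trans hγ)) (f γ hγ)) :
    limsupEl σ ζ f = supEl σ {y | ∃ ξ, ∃ hξ : ξ < ζ, y = f ξ hξ} := by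
  induction σ with
  | base => exact limsupEl_base_eq_supEl_of_monotone ζ f h
  | arrow σ τ _ ihτ =>
    funext x
    rw [limsupEl_arrow_apply, supEl_arrow_apply]
    exact ihτ _ fun α γ hαγ hγ => h α γ hαγ hγ x

lemma Le.refl (σ : Ty) (a : El σ) : Le σ a a := by
  induction σ with
  | base => exact le_rfl
  | arrow σ τ _ ihτ => exact fun x => ihτ (a x)

lemma hpLe_arrow_self_iff {ρ : Ty} {f g : El (.arrow ρ ρ)} :
    HpLe (.arrow ρ ρ) f g ↔ ∀ x, Hp ρ x → HpLe ρ (f x) (g x) := by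
  simp only [HpLe, HPaux]
  rfl

lemma hpLe_arrow_iff_of_ne {ρ τ : Ty} (hρτ : ρ ≠ τ) {f g : El (.arrow ρ τ)} :
    HpLe (.arrow ρ τ) f g ↔ Le (.arrow ρ τ) f g := by
  simp only [HpLe, HPaux, if_neg hρτ]

lemma hpEq_arrow_self_iff {ρ : Ty} {f g : El (.arrow ρ ρ)} :
    HpEq (.arrow ρ ρ) f g ↔ ∀ x, Hp ρ x → HpEq ρ (f x) (g x) := by
  simp only [HpEq, hpLe_arrow_self_iff, ← forall_and]

lemma HpLe.refl (σ : Ty) (a : El σ) : HpLe σ a a := by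
  induction σ with
  | base => exact le_rfl
  | arrow ρ τ _ ihτ =>
    by_cases hρτ : ρ = τ
    · subst hρτ
      exact hpLe_arrow_self_iff.2 fun x _ => ihτ (a x)
    · exact (hpLe_arrow_iff_of_ne hρτ).2 (Le.refl _ a)

lemma HpEq.of_eq {σ : Ty} {a b : El σ} (hab : a = b) : HpEq σ a b :=
  hab ▸ ⟨HpLe.refl σ a, HpLe.refl σ a⟩

/-- Off the types `ρ → ρ`, `≤hp` is the pointwise order, so `limsup` and `sup` agree on the
nose; on `ρ → ρ` they agree at every h.p. argument, which is all `=hp` sees. -/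
theorem limsup_hpEq_sup_general (σ : Ty) (ζ : Ordinal)
    (f : ∀ ξ : Ordinal, ξ < ζ → El σ)
    (h : ∀ α γ (hαγ : α < γ) (hγ : γ < ζ), HpLe σ (f α (hαγ.trans hγ)) (f γ hγ)) :
    HpEq σ (limsupEl σ ζ f) (supEl σ {y | ∃ ξ, ∃ hξ : ξ < ζ, y = f ξ hξ}) := by
  induction σ with
  | base => exact HpEq.of_eq (limsupEl_eq_supEl_of_monotone .base ζ f h)
  | arrow ρ τ _ ihτ =>
    by_cases hρτ : ρ = τ
    · subst hρτ
      refine hpEq_arrow_self_iff.2 fun x hx => ?_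
      rw [limsupEl_arrow_apply, supEl_arrow_apply]
      exact ihτ _ fun α γ hαγ hγ => hpLe_arrow_self_iff.1 (h α γ hαγ hγ) x hx
    · refine HpEq.of_eq (limsupEl_eq_supEl_of_monotone _ ζ f fun α γ hαγ hγ => ?_)
      exact (hpLe_arrow_iff_of_ne hρτ).1 (h α γ hαγ hγ)

/-- If `f_α ≤hp f_γ` whenever `α < γ < ζ`, then
`limsup_{ξ→ζ} f_ξ =hp sup_{ξ<ζ} f_ξ`. -/
theorem limsup_hpEq_sup (σ : Ty) (ζ : Ordinal) (hζ : ζ < ω₁)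
    (f : ∀ ξ : Ordinal, ξ < ζ → El σ)
    (h : ∀ α γ (hαγ : α < γ) (hγ : γ < ζ), HpLe σ (f α (hαγ.trans hγ)) (f γ hγ)) :
    HpEq σ (limsupEl σ ζ f) (supEl σ {y | ∃ ξ, ∃ hξ : ξ < ζ, y = f ξ hξ}) :=
  limsup_hpEq_sup_general σ ζ f h

end IterOrd
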